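/- A binary De Morgan function f is a protoimplication if and only if x ↔_{t-min} y ≤ f(x, y) ≤ x →_{t-max} y pointwise in the truth order, and this holds if and only if x ↔_{i-min} y ⊑ f(x, y) ⊑ x →_{i-max} y pointwise in the information order. -/

import Mathlib

set_option autoImplicit false

/-- The four truth values of the Belnap–Dunn logic. -/
inductive DM4 : Type
  | t
  | f
  | n
  | b
deriving DecidableEq

namespace DM4

/-- De Morgan negation. -/
def neg : DM4 → DM4
  | t => f
  | f => t
  | n => n
  | b => b

/-- Conflation. -/
def conf : DM4 → DM4
  | t => t
  | f => f
  | n => b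
  | b => n

/-- Meet in the truth order. -/
def meet : DM4 → DM4 → DM4
  | f, _ => f
  | _, f => f
  | t, y => y
  | x, t => x
  | n, n => n
  | b, b => b
  | n, b => f
  | b, n => f

/-- Join in the truth order. -/
def join : DM4 → DM4 → DM4
  | t, _ => t
  | _, t => t
  | f, y => y
  | x, f => x
  | n, n => n
  | b, b => b
  | n, b => t
  | b, n => t

/-- Meet in the information order (⊗). -/
def imeet : DM4 → DM4 → DM4
  | n, _ => n
  | _, n => n
  | b, y => y
  | x, b => x
  | t, t => t
  | f, f => f
  | t, f => n
  | f, t => n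

/-- Join in the information order (⊕). -/
def ijoin : DM4 → DM4 → DM4
  | b, _ => b
  | _, b => b
  | n, y => y
  | x, n => x
  | t, t => t
  | f, f => f
  | t, f => b
  | f, t => b

/-- The truth order: least element `f`, greatest element `t`, with `n`, `b` incomparable. -/
def tle (x y : DM4) : Prop := x = y ∨ x = f ∨ y = t

/-- The information order: least element `n`, greatest element `b`, with `t`, `f` incomparable. -/
def ile (x y : DM4) : Prop := x = y ∨ x = n ∨ y = b

/-- □: maps t to t and everything else to f. -/
def box : DM4 → DM4
  | t => t
  | _ => f

/-- ◇: maps f to f and everything else to t. -/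
def diamond : DM4 → DM4
  | f => f
  | _ => t

/-- Δ: maps t, b to t and n, f to f. -/
def delta : DM4 → DM4
  | t => t
  | b => t
  | _ => f

/-- ∇: maps t, n to t and b, f to f. -/
def nabla : DM4 → DM4
  | t => t
  | n => t
  | _ => f

/-- id_{b↦n}: maps b to n and fixes t, f, n. -/
def idbn : DM4 → DM4
  | b => n
  | x => x

/-- id_{n↦b}: maps n to b and fixes t, f, b. -/
def idnb : DM4 → DM4
  | n => b
  | x => x

/-- id_{n↦t}: maps n to t and fixes t, f, b. -/
def idnt : DM4 → DM4
  | n => t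
  | x => x

/-- id_{b↦t}: maps b to t and fixes t, f, n. -/
def idbt : DM4 → DM4
  | b => t
  | x => x

/-- t_{n↦n}: maps n to n and everything else to t. -/
def tnn : DM4 → DM4
  | n => n
  | _ => t

/-- t_{b↦b}: maps b to b and everything else to t. -/
def tbb : DM4 → DM4
  | b => b
  | _ => t

/-- The binary function pbp²₁. -/
def pbp1 : DM4 → DM4 → DM4
  | t, t => t | t, f => f | t, n => f | t, b => b
  | f, t => t | f, f => f | f, n => f | f, b => b
  | n, t => t | n, f => f | n, n => n | n, b => b
  | b, t => b | b, f => f | b, n => f | b, b => b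

/-- The binary function pbp²₂. -/
def pbp2 : DM4 → DM4 → DM4
  | t, t => t | t, f => f | t, n => n | t, b => f
  | f, t => t | f, f => f | f, n => n | f, b => f
  | n, t => n | n, f => f | n, n => n | n, b => f
  | b, t => t | b, f => f | b, n => n | b, b => b

/-- The binary function mnh²₁. -/
def mnh1 : DM4 → DM4 → DM4
  | t, t => f | t, f => f | t, n => n | t, b => b
  | f, t => f | f, f => f | f, n => n | f, b => b
  | n, t => f | n, f => f | n, n => n | n, b => f
  | b, t => f | b, f => f | b, n => n | b, b => b

/-- The binary function mnh²₂. -/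
def mnh2 : DM4 → DM4 → DM4
  | t, t => f | t, f => f | t, n => n | t, b => b
  | f, t => f | f, f => f | f, n => n | f, b => b
  | n, t => f | n, f => f | n, n => n | n, b => b
  | b, t => f | b, f => f | b, n => f | b, b => b

/-- The binary function mhnp². -/
def mhnp2 : DM4 → DM4 → DM4
  | t, _ => t
  | f, _ => t
  | n, b => f
  | n, _ => n
  | b, n => f
  | b, _ => b

/-- The binary function mnp²₁. -/
def mnp1 : DM4 → DM4 → DM4
  | t, b => b
  | t, _ => t
  | f, b => b
  | f, _ => t
  | n, b => f
  | n, _ => n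
  | b, n => f
  | b, _ => b

/-- The binary function mnp²₂. -/
def mnp2 : DM4 → DM4 → DM4
  | t, _ => t
  | f, _ => t
  | n, _ => n
  | b, n => f
  | b, _ => b

/-- The binary function mnp²₃. -/
def mnp3 : DM4 → DM4 → DM4
  | t, n => n
  | t, _ => t
  | f, n => n
  | f, _ => t
  | n, b => f
  | n, _ => n
  | b, n => f
  | b, _ => b

/-- The binary function mnp²₄. -/
def mnp4 : DM4 → DM4 → DM4
  | t, _ => t
  | f, _ => t
  | n, b => f
  | n, _ => n
  | b, _ => b

/-- The ternary function mhnp³. -/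
def mhnp3 : DM4 → DM4 → DM4 → DM4
  | _, t, _ => f
  | _, f, _ => f
  | t, n, _ => n
  | f, n, _ => f
  | b, n, _ => f
  | n, n, b => f
  | n, n, _ => n
  | t, b, _ => b
  | f, b, _ => f
  | n, b, _ => f
  | b, b, n => f
  | b, b, _ => b

/-- The set of designated values. -/
def Des : Set DM4 := {t, b}

/-- Designatedness as a Boolean predicate. -/
def des : DM4 → Bool
  | t => true
  | b => true
  | _ => false

/-- The protoimplication →_{t-max}. -/
def tmax (x y : DM4) : DM4 :=
  match des x, des y with
  | true, false => n
  | _, _ => t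

/-- The protoimplication →_{i-max}. -/
def imax (x y : DM4) : DM4 :=
  match des x, des y with
  | true, false => f
  | _, _ => b

/-- The protoimplication ↔_{t-min}. -/
def tmin (x y : DM4) : DM4 := if x = y then b else f

/-- The protoimplication ↔_{i-min}. -/
def imin (x y : DM4) : DM4 := if x = y then t else n

/-- A binary operation is a protoimplication if it satisfies Reflexivity and Modus Ponens
with respect to the designated set {t, b}. -/
def IsProtoimplication (r : DM4 → DM4 → DM4) : Prop :=
  (∀ a : DM4, r a a ∈ Des) ∧ ∀ a c : DM4, a ∈ Des → r a c ∈ Des → c ∈ Des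

/-- `DMFun k` is the type of De Morgan functions of arity `k + 1` (arities are positive). -/
abbrev DMFun (k : ℕ) : Type := (Fin (k + 1) → DM4) → DM4

/-- Membership in the clone generated by the family of operations `S`
(`S k` is the set of generators of arity `k + 1`). -/
inductive InClone (S : ∀ k : ℕ, Set (DMFun k)) : ∀ k : ℕ, DMFun k → Prop
  | base {k : ℕ} {g : DMFun k} : g ∈ S k → InClone S k g
  | proj {k : ℕ} (i : Fin (k + 1)) : InClone S k (fun x => x i)
  | comp {k m : ℕ} {g : DMFun m} {h : Fin (m + 1) → DMFun k} :
      InClone S m g → (∀ i, InClone S k (h i)) →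
      InClone S k (fun x => g (fun i => h i x))

/-- A family of sets of De Morgan functions is a clone if it contains all projections
and is closed under composition. -/
structure IsClone (C : ∀ k : ℕ, Set (DMFun k)) : Prop where
  proj : ∀ (k : ℕ) (i : Fin (k + 1)), (fun x => x i) ∈ C k
  comp : ∀ (k m : ℕ) (g : DMFun m) (h : Fin (m + 1) → DMFun k),
      g ∈ C m → (∀ i, h i ∈ C k) → (fun x => g (fun i => h i x)) ∈ C k

/-- The generating family consisting of a single unary operation. -/
def op1 (g : DM4 → DM4) : ∀ k : ℕ, Set (DMFun k)
  | 0 => {fun x => g (x 0)}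
  | _ + 1 => ∅

/-- The generating family consisting of a single binary operation. -/
def op2 (g : DM4 → DM4 → DM4) : ∀ k : ℕ, Set (DMFun k)
  | 1 => {fun x => g (x 0) (x 1)}
  | _ => ∅

/-- The generating family consisting of a single ternary operation. -/
def op3 (g : DM4 → DM4 → DM4 → DM4) : ∀ k : ℕ, Set (DMFun k)
  | 2 => {fun x => g (x 0) (x 1) (x 2)}
  | _ => ∅

/-- Union of two families of operations. -/
def funion (S T : ∀ k : ℕ, Set (DMFun k)) : ∀ k : ℕ, Set (DMFun k) := fun k => S k ∪ T k

infixr:65 " ⊹ " => funion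

/-- The generators of DLat: ∧, ∨, t, f (constants as unary constant functions). -/
def DLatGen : ∀ k : ℕ, Set (DMFun k) :=
  op2 meet ⊹ op2 join ⊹ op1 (fun _ => t) ⊹ op1 (fun _ => f)

/-- The generators of DMA: ∧, ∨, t, f, −. -/
def DMAGen : ∀ k : ℕ, Set (DMFun k) := DLatGen ⊹ op1 neg

/-- The generators of BiLat: ∧, ∨, t, f, ⊗, ⊕, n, b. -/
def BiLatGen : ∀ k : ℕ, Set (DMFun k) :=
  DLatGen ⊹ op2 imeet ⊹ op2 ijoin ⊹ op1 (fun _ => n) ⊹ op1 (fun _ => b)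

/-- A De Morgan function is harmonious if it commutes with conflation. -/
def Harmonious {k : ℕ} (g : DMFun k) : Prop :=
  ∀ x : Fin (k + 1) → DM4, g (fun i => conf (x i)) = conf (g x)

/-- A De Morgan function is positive if it is monotone in the componentwise truth order. -/
def Positive {k : ℕ} (g : DMFun k) : Prop :=
  ∀ x y : Fin (k + 1) → DM4, (∀ i, tle (x i) (y i)) → tle (g x) (g y)

/-- A De Morgan function is persistent if it is monotone in the componentwise
information order. -/
def Persistent {k : ℕ} (g : DMFun k) : Prop :=
  ∀ x y : Fin (k + 1) → DM4, (∀ i, ile (x i) (y i)) → ile (g x) (g y)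

/-- A De Morgan function preserves a subset X of DM4 if it maps tuples from X into X. -/
def Preserves {k : ℕ} (g : DMFun k) (X : Set DM4) : Prop :=
  ∀ x : Fin (k + 1) → DM4, (∀ i, x i ∈ X) → g x ∈ X

def B2 : Set DM4 := {t, f}
def K3 : Set DM4 := {t, n, f}
def P3 : Set DM4 := {t, b, f}

/-- A unary operation as a De Morgan function. -/
def toF1 (g : DM4 → DM4) : DMFun 0 := fun x => g (x 0)

/-- A binary operation as a De Morgan function. -/
def toF2 (g : DM4 → DM4 → DM4) : DMFun 1 := fun x => g (x 0) (x 1)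

/-- A ternary operation as a De Morgan function. -/
def toF3 (g : DM4 → DM4 → DM4 → DM4) : DMFun 2 := fun x => g (x 0) (x 1) (x 2)

/-- The clone generated by a family of operations, as a family of sets. -/
def CloneOf (S : ∀ k : ℕ, Set (DMFun k)) : ∀ k : ℕ, Set (DMFun k) :=
  fun k => {g | InClone S k g}

/-- Inclusion of families of operations. -/
def CloneLE (C D : ∀ k : ℕ, Set (DMFun k)) : Prop := ∀ k : ℕ, C k ⊆ D k


/-!
Being a protoimplication splits into two independent conditions on `r`: the diagonal is
designated, and `r a c` is undesignated whenever `a` is designated and `c` is not (modus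
ponens, contraposed). In both orders the lower bound `x ↔_min y` is the bottom element off the
diagonal and the least designated value (`b` for `≤`, `t` for `⊑`) on it, so it encodes the
first condition; the upper bound `x →_max y` is the top element except at designated `x` and
undesignated `y`, where it is the greatest undesignated value (`n` for `≤`, `f` for `⊑`), so it
encodes the second.
-/

theorem isProtoimplication_iff_between (r : DM4 → DM4 → DM4) (R : DM4 → DM4 → Prop)
    (lo hi : DM4 → DM4 → DM4) (hlo : ∀ x y v, R (lo x y) v ↔ (x = y → v ∈ Des))
    (hhi : ∀ x y v, R v (hi x y) ↔ (x ∈ Des → y ∉ Des → v ∉ Des)) :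
    IsProtoimplication r ↔ ∀ x y, R (lo x y) (r x y) ∧ R (r x y) (hi x y) := by
  simp only [hlo, hhi, forall_and, IsProtoimplication]
  refine and_congr ⟨fun h x _ hxy => hxy ▸ h x, fun h a => h a a rfl⟩ ?_
  exact forall₂_congr fun a c =>
    ⟨fun h ha hc hr => hc (h ha hr), fun h ha hr => by_contra fun hc => h ha hc hr⟩

theorem tle_tmin_iff (x y v : DM4) : tle (tmin x y) v ↔ (x = y → v ∈ Des) := by
  cases x <;> cases y <;> cases v <;> simp [tle, tmin, Des]

theorem tle_tmax_iff (x y v : DM4) : tle v (tmax x y) ↔ (x ∈ Des → y ∉ Des → v ∉ Des) := by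
  cases x <;> cases y <;> cases v <;> simp [tle, tmax, des, Des]

theorem ile_imin_iff (x y v : DM4) : ile (imin x y) v ↔ (x = y → v ∈ Des) := by
  cases x <;> cases y <;> cases v <;> simp [ile, imin, Des]

theorem ile_imax_iff (x y v : DM4) : ile v (imax x y) ↔ (x ∈ Des → y ∉ Des → v ∉ Des) := by
  cases x <;> cases y <;> cases v <;> simp [ile, imax, des, Des]

/-- A binary De Morgan function is a protoimplication iff it lies
between ↔_{t-min} and →_{t-max} in the truth order, iff it lies between
↔_{i-min} and →_{i-max} in the information order. -/
theorem smallest_and_largest_protoimplications (r : DM4 → DM4 → DM4) :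
    (IsProtoimplication r ↔
      ∀ x y : DM4, tle (tmin x y) (r x y) ∧ tle (r x y) (tmax x y)) ∧
    (IsProtoimplication r ↔
      ∀ x y : DM4, ile (imin x y) (r x y) ∧ ile (r x y) (imax x y)) :=
  ⟨isProtoimplication_iff_between r tle tmin tmax tle_tmin_iff tle_tmax_iff,
    isProtoimplication_iff_between r ile imin imax ile_imin_iff ile_imax_iff⟩

end DM4
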